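/- There exist three bricks in R^d (for every d ≥ 2) and a box Q tileable by translates of these three bricks, such that no hyperplane cut splits Q into two boxes each tileable by translates of a proper subset of the three brick types. (The 2-dimensional example 1×R, R×1, (R-1)×(R-1) tiling the (R+1)×(R+1) square, extended by side lengths 1 in extra coordinates, works.) -/

import Mathlib

/-!
The example: in the plane of the first two coordinates, the bricks `1 × R`, `R × 1` and
`(R - 1) × (R - 1)` tile the square of side `R + 1` in a pinwheel pattern; all other sides are `1`.

The obstruction is a Fourier argument. For a frequency vector `ξ`, the integral of
`x ↦ exp (2πi ⟨ξ, x⟩)` over a box factorizes over the coordinates, and it vanishes exactly when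
some side `ℓ j` of the box has `ξ j ≠ 0` and `ξ j * ℓ j ∈ ℤ`. The integral is additive over a
tiling, so if every brick type in use has such a side, so has the tiled box.

Any cut of `Q` leaves a nondegenerate piece with an in-plane side `R + 1`. If it were tiled by only
two brick types `A` and `B`, the frequencies `(A₀⁻¹, B₁⁻¹)` and `(B₀⁻¹, A₁⁻¹)` would make either
`R + 1` an integer multiple of one of `1, R, R - 1`, or the other in-plane side a common nonzero
integer multiple of two of them; both are impossible because `1` and `R` are linearly independent
over `ℚ`.
-/

open MeasureTheory

/-- `Brick d c` is the axis-aligned box `∏_j (0, c j)` in `ℝ^d`. -/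
def Brick (d : ℕ) (c : Fin d → ℝ) : Set (EuclideanSpace ℝ (Fin d)) :=
  {x | ∀ j, x j ∈ Set.Ioo 0 (c j)}

/-- `TriTiles d c1 c2 c3 S` : the region `S` can be tiled by finitely many translates of
the three bricks with dimensions `c1`, `c2`, `c3`. -/
def TriTiles (d : ℕ) (c1 c2 c3 : Fin d → ℝ) (S : Set (EuclideanSpace ℝ (Fin d))) : Prop :=
  ∃ Λ1 Λ2 Λ3 : Finset (EuclideanSpace ℝ (Fin d)),
    ∀ᵐ x : EuclideanSpace ℝ (Fin d),
      (∑ l ∈ Λ1, (Brick d c1).indicator (fun _ => (1 : ℝ)) (x - l)) +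
      (∑ l ∈ Λ2, (Brick d c2).indicator (fun _ => (1 : ℝ)) (x - l)) +
      (∑ l ∈ Λ3, (Brick d c3).indicator (fun _ => (1 : ℝ)) (x - l)) =
      S.indicator (fun _ => (1 : ℝ)) x

/-- `TriTilesProper` : the region `S` can be tiled as in `TriTiles`, but using only a
proper subset of the three brick types (at least one type is not used at all). -/
def TriTilesProper (d : ℕ) (c1 c2 c3 : Fin d → ℝ) (S : Set (EuclideanSpace ℝ (Fin d))) :
    Prop :=
  ∃ Λ1 Λ2 Λ3 : Finset (EuclideanSpace ℝ (Fin d)),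
    (Λ1 = ∅ ∨ Λ2 = ∅ ∨ Λ3 = ∅) ∧
    ∀ᵐ x : EuclideanSpace ℝ (Fin d),
      (∑ l ∈ Λ1, (Brick d c1).indicator (fun _ => (1 : ℝ)) (x - l)) +
      (∑ l ∈ Λ2, (Brick d c2).indicator (fun _ => (1 : ℝ)) (x - l)) +
      (∑ l ∈ Λ3, (Brick d c3).indicator (fun _ => (1 : ℝ)) (x - l)) =
      S.indicator (fun _ => (1 : ℝ)) x

open Set Complex
open scoped Real

theorem EuclideanSpace.integral_fintype_prod_eq_prod {ι : Type*} [Fintype ι] (g : ι → ℝ → ℂ) :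
    ∫ x : EuclideanSpace ℝ ι, ∏ j, g j (x j) = ∏ j, ∫ t, g j t := by
  rw [← (PiLp.volume_preserving_toLp ι).integral_comp
    (MeasurableEquiv.toLp 2 (ι → ℝ)).measurableEmbedding]
  exact MeasureTheory.integral_fintype_prod_eq_prod g

theorem EuclideanSpace.integrable_fintype_prod {ι : Type*} [Fintype ι] {g : ι → ℝ → ℂ}
    (hg : ∀ j, Integrable (g j)) :
    Integrable fun x : EuclideanSpace ℝ ι => ∏ j, g j (x j) := by
  rw [← (PiLp.volume_preserving_toLp ι).integrable_comp_emb
    (MeasurableEquiv.toLp 2 (ι → ℝ)).measurableEmbedding]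
  exact Integrable.fintype_prod hg

theorem EuclideanSpace.ae_apply_ne {ι : Type*} [Fintype ι] (j : ι) (t : ℝ) :
    ∀ᵐ x : EuclideanSpace ℝ ι, x j ≠ t := by
  have h : ∀ᵐ y : ι → ℝ, y j ≠ t := by
    rw [volume_pi]
    exact Measure.ae_eval_ne (α := fun _ => ℝ) _ j t
  exact (PiLp.volume_preserving_ofLp ι).quasiMeasurePreserving.ae h

section Boxes

variable {d : ℕ}

def openBox (lo hi : Fin d → ℝ) : Set (EuclideanSpace ℝ (Fin d)) :=
  {x | ∀ j, x j ∈ Ioo (lo j) (hi j)}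

theorem measurableSet_openBox (lo hi : Fin d → ℝ) : MeasurableSet (openBox lo hi) := by
  simp only [openBox, ofPred_forall]
  exact .iInter fun j => measurableSet_Ioo.preimage (by fun_prop)

theorem indicator_openBox_prod {M : Type*} [CommMonoidWithZero M] (lo hi : Fin d → ℝ)
    (g : Fin d → ℝ → M) (x : EuclideanSpace ℝ (Fin d)) :
    (openBox lo hi).indicator (fun y => ∏ j, g j (y j)) x =
      ∏ j, (Ioo (lo j) (hi j)).indicator (g j) (x j) := by
  by_cases hx : x ∈ openBox lo hi
  · rw [indicator_of_mem hx]
    exact Finset.prod_congr rfl fun j _ => (indicator_of_mem (hx j) _).symm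
  · obtain ⟨j, hj⟩ := not_forall.1 hx
    rw [indicator_of_notMem hx, Finset.prod_eq_zero (Finset.mem_univ j) (indicator_of_notMem hj _)]

theorem indicator_openBox_one (lo hi : Fin d → ℝ) (x : EuclideanSpace ℝ (Fin d)) :
    (openBox lo hi).indicator (fun _ => (1 : ℝ)) x =
      ∏ j, (Ioo (lo j) (hi j)).indicator (fun _ => 1) (x j) := by
  simpa using indicator_openBox_prod lo hi (fun _ _ => (1 : ℝ)) x

theorem setIntegral_openBox_prod (lo hi : Fin d → ℝ) (g : Fin d → ℝ → ℂ) :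
    ∫ x in openBox lo hi, ∏ j, g j (x j) = ∏ j, ∫ t in Ioo (lo j) (hi j), g j t := by
  rw [← integral_indicator (measurableSet_openBox lo hi)]
  simp_rw [indicator_openBox_prod, EuclideanSpace.integral_fintype_prod_eq_prod,
    integral_indicator measurableSet_Ioo]

theorem integrableOn_openBox_prod (lo hi : Fin d → ℝ) (g : Fin d → ℝ → ℂ)
    (hg : ∀ j, IntegrableOn (g j) (Ioo (lo j) (hi j))) :
    IntegrableOn (fun x => ∏ j, g j (x j)) (openBox lo hi) := by
  rw [← integrable_indicator_iff (measurableSet_openBox lo hi),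
    funext (indicator_openBox_prod lo hi g)]
  exact EuclideanSpace.integrable_fintype_prod fun j =>
    (hg j).integrable_indicator measurableSet_Ioo

theorem sub_mem_brick_iff (c : Fin d → ℝ) (l x : EuclideanSpace ℝ (Fin d)) :
    x - l ∈ Brick d c ↔ x ∈ openBox l (l + c) := by
  simp [Brick, openBox, sub_lt_iff_lt_add']

theorem indicator_brick_sub {M : Type*} [Zero M] (c : Fin d → ℝ) (l x : EuclideanSpace ℝ (Fin d))
    (m : M) :
    (Brick d c).indicator (fun _ => m) (x - l) = (openBox l (l + c)).indicator (fun _ => m) x := by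
  classical
  simp only [indicator_apply, sub_mem_brick_iff]

theorem indicator_brick_sub_smul {E : Type*} [NormedAddCommGroup E] [NormedSpace ℝ E]
    (c : Fin d → ℝ) (l x : EuclideanSpace ℝ (Fin d)) (w : EuclideanSpace ℝ (Fin d) → E) :
    (Brick d c).indicator (fun _ => (1 : ℝ)) (x - l) • w x = (openBox l (l + c)).indicator w x := by
  classical
  simp only [indicator_apply, sub_mem_brick_iff, ite_smul, one_smul, zero_smul]

theorem setOf_lt_eq_openBox (lo hi : Fin d → ℝ) (j : Fin d) (α : ℝ) :
    {x : EuclideanSpace ℝ (Fin d) | (∀ i, x i ∈ Ioo (lo i) (hi i)) ∧ x j < α} =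
      openBox lo (Function.update hi j (min (hi j) α)) := by
  ext x
  simp only [openBox, mem_ofPred_eq, mem_Ioo, Function.update_apply]
  grind

theorem setOf_gt_eq_openBox (lo hi : Fin d → ℝ) (j : Fin d) (α : ℝ) :
    {x : EuclideanSpace ℝ (Fin d) | (∀ i, x i ∈ Ioo (lo i) (hi i)) ∧ α < x j} =
      openBox (Function.update lo j (max (lo j) α)) hi := by
  ext x
  simp only [openBox, mem_ofPred_eq, mem_Ioo, Function.update_apply]
  grind

end Boxes

section Tilings

variable {d : ℕ}

def IsTriTiling (c₁ c₂ c₃ : Fin d → ℝ) (Λ₁ Λ₂ Λ₃ : Finset (EuclideanSpace ℝ (Fin d)))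
    (S : Set (EuclideanSpace ℝ (Fin d))) : Prop :=
  ∀ᵐ x : EuclideanSpace ℝ (Fin d),
    (∑ l ∈ Λ₁, (Brick d c₁).indicator (fun _ => (1 : ℝ)) (x - l)) +
    (∑ l ∈ Λ₂, (Brick d c₂).indicator (fun _ => (1 : ℝ)) (x - l)) +
    (∑ l ∈ Λ₃, (Brick d c₃).indicator (fun _ => (1 : ℝ)) (x - l)) =
    S.indicator (fun _ => (1 : ℝ)) x

theorem setIntegral_eq_sum_of_isTriTiling {E : Type*} [NormedAddCommGroup E] [NormedSpace ℝ E]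
    {w : EuclideanSpace ℝ (Fin d) → E} (hw : ∀ lo hi, IntegrableOn w (openBox lo hi))
    {c₁ c₂ c₃ : Fin d → ℝ} {Λ₁ Λ₂ Λ₃ : Finset (EuclideanSpace ℝ (Fin d))}
    {S : Set (EuclideanSpace ℝ (Fin d))} (hS : MeasurableSet S)
    (H : IsTriTiling c₁ c₂ c₃ Λ₁ Λ₂ Λ₃ S) :
    ∫ x in S, w x = (∑ l ∈ Λ₁, ∫ x in openBox l (l + c₁), w x) +
      (∑ l ∈ Λ₂, ∫ x in openBox l (l + c₂), w x) + (∑ l ∈ Λ₃, ∫ x in openBox l (l + c₃), w x) := by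
  have hint (c : Fin d → ℝ) (Λ : Finset (EuclideanSpace ℝ (Fin d))) :
      Integrable fun x => ∑ l ∈ Λ, (openBox l (l + c)).indicator w x :=
    integrable_finsetSum _ fun l _ => (hw _ _).integrable_indicator (measurableSet_openBox _ _)
  calc ∫ x in S, w x = ∫ x, S.indicator (fun _ => (1 : ℝ)) x • w x := by
        simp_rw [← integral_indicator hS, ← indicator_smul_apply_left, one_smul]
    _ = ∫ x, (∑ l ∈ Λ₁, (openBox l (l + c₁)).indicator w x) +
          (∑ l ∈ Λ₂, (openBox l (l + c₂)).indicator w x) +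
          (∑ l ∈ Λ₃, (openBox l (l + c₃)).indicator w x) :=
        integral_congr_ae <| H.mono fun x hx => by
          simp only [← hx, add_smul, Finset.sum_smul, indicator_brick_sub_smul]
    _ = _ := by
        rw [integral_add ?_ (hint c₃ Λ₃), integral_add (hint c₁ Λ₁) (hint c₂ Λ₂)]
        · simp_rw [integral_finsetSum _ fun l _ =>
            (hw _ _).integrable_indicator (measurableSet_openBox _ _),
            integral_indicator (measurableSet_openBox _ _)]
        · exact (hint c₁ Λ₁).add (hint c₂ Λ₂)

end Tilings

section PlaneWaves

theorem cexp_two_pi_I_mul_eq_one_iff (x : ℝ) : cexp (2 * π * I * x) = 1 ↔ ∃ n : ℤ, x = n := by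
  rw [Complex.exp_eq_one_iff]
  refine exists_congr fun n => ?_
  rw [mul_comm (n : ℂ), mul_right_inj' two_pi_I_ne_zero]
  exact_mod_cast Iff.rfl

theorem integral_Ioo_cexp_eq_zero_iff {a b ξ : ℝ} (hab : a ≤ b) (hξ : ξ ≠ 0) :
    ∫ t in Ioo a b, cexp (2 * π * I * ξ * t) = 0 ↔ ∃ n : ℤ, ξ * (b - a) = n := by
  have hk : 2 * π * I * ξ ≠ 0 := mul_ne_zero two_pi_I_ne_zero (ofReal_ne_zero.2 hξ)
  have hsplit : cexp (2 * π * I * ξ * b) =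
      cexp (2 * π * I * ξ * a) * cexp (2 * π * I * ↑(ξ * (b - a))) := by
    rw [← Complex.exp_add]; push_cast; ring_nf
  rw [← integral_Ioc_eq_integral_Ioo, ← intervalIntegral.integral_of_le hab,
    integral_exp_mul_complex hk, div_eq_zero_iff, or_iff_left hk, sub_eq_zero, hsplit,
    mul_eq_left₀ (Complex.exp_ne_zero _), cexp_two_pi_I_mul_eq_one_iff]

theorem integral_Ioo_cexp_eq_zero {a b ξ : ℝ} (hξ : ξ ≠ 0) (h : ∃ n : ℤ, ξ * (b - a) = n) :
    ∫ t in Ioo a b, cexp (2 * π * I * ξ * t) = 0 := by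
  rcases le_or_gt a b with hab | hba
  · exact (integral_Ioo_cexp_eq_zero_iff hab hξ).2 h
  · simp [Ioo_eq_empty_of_le hba.le]

variable {d : ℕ}

noncomputable def planeWave (ξ : Fin d → ℝ) (x : EuclideanSpace ℝ (Fin d)) : ℂ :=
  ∏ j, cexp (2 * π * I * ξ j * x j)

def HasIntegralSide (ξ c : Fin d → ℝ) : Prop :=
  ∃ j, ξ j ≠ 0 ∧ ∃ n : ℤ, ξ j * c j = n

theorem integrableOn_planeWave (ξ lo hi : Fin d → ℝ) :
    IntegrableOn (planeWave ξ) (openBox lo hi) :=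
  integrableOn_openBox_prod lo hi (fun j t => cexp (2 * π * I * ξ j * t)) fun _ =>
    (Continuous.integrableOn_Icc (by fun_prop)).mono_set Ioo_subset_Icc_self

theorem setIntegral_planeWave_eq_zero {ξ lo hi : Fin d → ℝ} (h : HasIntegralSide ξ (hi - lo)) :
    ∫ x in openBox lo hi, planeWave ξ x = 0 := by
  obtain ⟨j, hj, hn⟩ := h
  simp only [planeWave]
  rw [setIntegral_openBox_prod lo hi fun j t => cexp (2 * π * I * ξ j * t)]
  exact Finset.prod_eq_zero (Finset.mem_univ j) (integral_Ioo_cexp_eq_zero hj hn)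

theorem hasIntegralSide_of_setIntegral_planeWave_eq_zero {ξ lo hi : Fin d → ℝ}
    (hlt : ∀ j, lo j < hi j) (h : ∫ x in openBox lo hi, planeWave ξ x = 0) :
    HasIntegralSide ξ (hi - lo) := by
  simp only [planeWave] at h
  rw [setIntegral_openBox_prod lo hi fun j t => cexp (2 * π * I * ξ j * t),
    Finset.prod_eq_zero_iff] at h
  obtain ⟨j, -, hj⟩ := h
  by_cases hξ : ξ j = 0
  · simp [hξ, (hlt j).le, sub_eq_zero, (hlt j).ne'] at hj
  · exact ⟨j, hξ, (integral_Ioo_cexp_eq_zero_iff (hlt j).le hξ).1 hj⟩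

theorem hasIntegralSide_of_isTriTiling {ξ lo hi c₁ c₂ c₃ : Fin d → ℝ}
    {Λ₁ Λ₂ Λ₃ : Finset (EuclideanSpace ℝ (Fin d))} (hlt : ∀ j, lo j < hi j)
    (h₁ : Λ₁ = ∅ ∨ HasIntegralSide ξ c₁) (h₂ : Λ₂ = ∅ ∨ HasIntegralSide ξ c₂)
    (h₃ : Λ₃ = ∅ ∨ HasIntegralSide ξ c₃) (H : IsTriTiling c₁ c₂ c₃ Λ₁ Λ₂ Λ₃ (openBox lo hi)) :
    HasIntegralSide ξ (hi - lo) := by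
  have hsum (c : Fin d → ℝ) (Λ : Finset (EuclideanSpace ℝ (Fin d)))
      (h : Λ = ∅ ∨ HasIntegralSide ξ c) :
      ∑ l ∈ Λ, ∫ x in openBox l (l + c), planeWave ξ x = 0 := by
    rcases h with rfl | hc
    · exact Finset.sum_empty
    · exact Finset.sum_eq_zero fun l _ => setIntegral_planeWave_eq_zero (by simpa using hc)
  refine hasIntegralSide_of_setIntegral_planeWave_eq_zero hlt ?_
  rw [setIntegral_eq_sum_of_isTriTiling (integrableOn_planeWave ξ) (measurableSet_openBox _ _) H,
    hsum _ _ h₁, hsum _ _ h₂, hsum _ _ h₃, add_zero, add_zero]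

end PlaneWaves

section Incommensurability

theorem Irrational.eq_zero_of_int_mul_eq {R : ℝ} (hR : Irrational R) {a b a' b' m k : ℤ}
    (hdet : a * b' ≠ a' * b) (h : (m : ℝ) * (a + b * R) = k * (a' + b' * R)) : m = 0 := by
  have hR' : ((m * a - k * a' : ℤ) : ℝ) + ((m * b - k * b' : ℤ) : ℝ) * R = 0 := by
    push_cast; linear_combination h
  have hb : m * b - k * b' = 0 := by
    by_contra hb
    exact ((hR.intCast_mul hb).intCast_add _).ne_zero hR'
  have ha : m * a - k * a' = 0 := by
    rw [hb, Int.cast_zero, zero_mul, add_zero] at hR'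
    exact_mod_cast hR'
  have hdet' : m * (a * b' - a' * b) = 0 := by linear_combination b' * ha - a' * hb
  exact (mul_eq_zero.1 hdet').resolve_right (sub_ne_zero.2 hdet)

theorem eq_zero_of_int_mul_eq_of_mem {R x y : ℝ} (hR : Irrational R)
    (hx : x ∈ ({1, R, R - 1, R + 1} : Set ℝ)) (hy : y ∈ ({1, R, R - 1, R + 1} : Set ℝ))
    (hxy : x ≠ y) {m k : ℤ} (h : (m : ℝ) * x = k * y) : m = 0 := by
  have repr (z : ℝ) (hz : z ∈ ({1, R, R - 1, R + 1} : Set ℝ)) :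
      ∃ p ∈ ({(1, 0), (0, 1), (-1, 1), (1, 1)} : Finset (ℤ × ℤ)), z = p.1 + p.2 * R := by
    rcases hz with rfl | rfl | rfl | rfl
    exacts [⟨(1, 0), by decide, by simp⟩, ⟨(0, 1), by decide, by simp⟩,
      ⟨(-1, 1), by decide, by push_cast; ring⟩, ⟨(1, 1), by decide, by push_cast; ring⟩]
  obtain ⟨p, hp, rfl⟩ := repr x hx
  obtain ⟨q, hq, rfl⟩ := repr y hy
  refine hR.eq_zero_of_int_mul_eq ?_ h
  have hpq : p ≠ q := by rintro rfl; exact hxy rfl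
  clear h hxy hx hy
  revert p q
  decide

end Incommensurability

section Example

variable {n : ℕ}

-- The vector `(a, b, z, …, z)`: the example lives in the plane of the first two coordinates.
def plane (a b z : ℝ) : Fin (n + 2) → ℝ := Fin.cons a (Fin.cons b fun _ => z)

@[simp] theorem plane_zero (a b z : ℝ) : plane (n := n) a b z 0 = a := rfl

@[simp] theorem plane_one (a b z : ℝ) : plane (n := n) a b z 1 = b := rfl

theorem plane_of_ne {j : Fin (n + 2)} (h0 : j ≠ 0) (h1 : j ≠ 1) (a b z : ℝ) :
    plane a b z j = z := by
  obtain ⟨k, rfl⟩ := Fin.exists_succ_eq.2 h0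
  obtain ⟨k, rfl⟩ := Fin.exists_succ_eq.2 (show k ≠ 0 by rintro rfl; exact h1 rfl)
  rfl

theorem plane_pos {a b z : ℝ} (ha : 0 < a) (hb : 0 < b) (hz : 0 < z) (j : Fin (n + 2)) :
    0 < plane a b z j := by
  by_cases h0 : j = 0
  · simpa [h0]
  by_cases h1 : j = 1
  · simpa [h1]
  simpa [plane_of_ne h0 h1]

theorem indicator_Ioo_add_indicator_Ioo {a b c t : ℝ} (hab : a ≤ b) (hbc : b ≤ c) (ht : t ≠ b) :
    (Ioo a b).indicator (fun _ => (1 : ℝ)) t + (Ioo b c).indicator (fun _ => 1) t =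
      (Ioo a c).indicator (fun _ => 1) t := by
  classical
  simp only [indicator_apply, mem_Ioo]
  split_ifs <;> grind

theorem isTriTiling_square {R : ℝ} (hR : 1 ≤ R) :
    IsTriTiling (plane 1 R 1) (plane R 1 1) (plane (R - 1) (R - 1) 1)
      {WithLp.toLp 2 (plane 0 0 0), WithLp.toLp 2 (plane R 1 0)}
      {WithLp.toLp 2 (plane 1 0 0), WithLp.toLp 2 (plane 0 R 0)} {WithLp.toLp 2 (plane 1 1 0)}
      (openBox 0 (plane (n := n) (R + 1) (R + 1) 1)) := by
  have hne₁ : WithLp.toLp 2 (plane (n := n) 0 0 0) ≠ WithLp.toLp 2 (plane R 1 0) := fun h => by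
    simpa using congrArg (fun x => x 1) h
  have hne₂ : WithLp.toLp 2 (plane (n := n) 1 0 0) ≠ WithLp.toLp 2 (plane 0 R 0) := fun h => by
    simpa using congrArg (fun x => x 0) h
  -- Cutting each in-plane coordinate at `1` and `R` turns the claim into a polynomial identity.
  have split (t : ℝ) (h1 : t ≠ 1) (hR' : t ≠ R) :
      (Ioo 0 R).indicator (fun _ => (1 : ℝ)) t =
        (Ioo 0 1).indicator (fun _ => 1) t + (Ioo 1 R).indicator (fun _ => 1) t ∧
      (Ioo 1 (R + 1)).indicator (fun _ => (1 : ℝ)) t =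
        (Ioo 1 R).indicator (fun _ => 1) t + (Ioo R (R + 1)).indicator (fun _ => 1) t ∧
      (Ioo 0 (R + 1)).indicator (fun _ => (1 : ℝ)) t = (Ioo 0 1).indicator (fun _ => 1) t +
        (Ioo 1 R).indicator (fun _ => 1) t + (Ioo R (R + 1)).indicator (fun _ => 1) t := by
    refine ⟨(indicator_Ioo_add_indicator_Ioo zero_le_one hR h1).symm,
      (indicator_Ioo_add_indicator_Ioo hR (by linarith) hR').symm, ?_⟩
    rw [indicator_Ioo_add_indicator_Ioo zero_le_one hR h1,
      indicator_Ioo_add_indicator_Ioo (by linarith) (by linarith) hR']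
  filter_upwards [EuclideanSpace.ae_apply_ne 0 1, EuclideanSpace.ae_apply_ne 0 R,
    EuclideanSpace.ae_apply_ne 1 1, EuclideanSpace.ae_apply_ne 1 R] with x h01 h0R h11 h1R
  obtain ⟨a₁, a₂, a₃⟩ := split _ h01 h0R
  obtain ⟨b₁, b₂, b₃⟩ := split _ h11 h1R
  rw [Finset.sum_pair hne₁, Finset.sum_pair hne₂, Finset.sum_singleton]
  simp only [indicator_brick_sub, indicator_openBox_one, Fin.prod_univ_succ, plane, Fin.cons_zero,
    Fin.cons_succ, Fin.succ_zero_eq_one, Pi.add_apply, Pi.zero_apply, zero_add, add_comm 1 R,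
    add_sub_cancel]
  rw [a₁, a₂, a₃, b₁, b₂, b₃]
  ring

theorem hasIntegralSide_plane_iff {a b : ℝ} {ℓ : Fin (n + 2) → ℝ} :
    HasIntegralSide (plane a b 0) ℓ ↔
      (a ≠ 0 ∧ ∃ m : ℤ, a * ℓ 0 = m) ∨ (b ≠ 0 ∧ ∃ m : ℤ, b * ℓ 1 = m) := by
  constructor
  · rintro ⟨j, hj, hm⟩
    by_cases h0 : j = 0
    · subst h0; exact .inl ⟨hj, hm⟩
    by_cases h1 : j = 1
    · subst h1; exact .inr ⟨hj, hm⟩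
    exact absurd (plane_of_ne h0 h1 a b 0) hj
  · rintro (h | h)
    exacts [⟨0, h⟩, ⟨1, h⟩]

theorem hasIntegralSide_plane_fst {u b v z : ℝ} (hu : u ≠ 0) :
    HasIntegralSide (plane (n := n) u⁻¹ b 0) (plane u v z) :=
  hasIntegralSide_plane_iff.2 (.inl ⟨inv_ne_zero hu, 1, by simp [hu]⟩)

theorem hasIntegralSide_plane_snd {u a v z : ℝ} (hu : u ≠ 0) :
    HasIntegralSide (plane (n := n) a u⁻¹ 0) (plane v u z) :=
  hasIntegralSide_plane_iff.2 (.inr ⟨inv_ne_zero hu, 1, by simp [hu]⟩)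

theorem not_hasIntegralSide_pair {R : ℝ} (hR : Irrational R) (hR2 : 2 < R) {ℓ : Fin (n + 2) → ℝ} (hℓ₀ : ℓ 0 ≠ 0) (hℓ₁ : ℓ 1 ≠ 0)
    (hside : ℓ 0 = R + 1 ∨ ℓ 1 = R + 1) {u₀ u₁ v₀ v₁ : ℝ}
    (hu₀ : u₀ ∈ ({1, R, R - 1} : Set ℝ)) (hu₁ : u₁ ∈ ({1, R, R - 1} : Set ℝ))
    (hv₀ : v₀ ∈ ({1, R, R - 1} : Set ℝ)) (hv₁ : v₁ ∈ ({1, R, R - 1} : Set ℝ))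
    (h₀ : u₀ ≠ v₀) (h₁ : u₁ ≠ v₁) :
    ¬ (HasIntegralSide (plane u₀⁻¹ v₁⁻¹ 0) ℓ ∧ HasIntegralSide (plane v₀⁻¹ u₁⁻¹ 0) ℓ) := by
  have pos {x : ℝ} (hx : x ∈ ({1, R, R - 1, R + 1} : Set ℝ)) : 0 < x := by
    rcases hx with rfl | rfl | rfl | rfl <;> linarith
  have incommensurable {x y s : ℝ} (hx : x ∈ ({1, R, R - 1, R + 1} : Set ℝ))
      (hy : y ∈ ({1, R, R - 1, R + 1} : Set ℝ)) (hxy : x ≠ y) (hs : s ≠ 0) :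
      (∃ m : ℤ, x⁻¹ * s = m) → (∃ k : ℤ, y⁻¹ * s = k) → False := by
    rintro ⟨m, hm⟩ ⟨k, hk⟩
    rw [inv_mul_eq_iff_eq_mul₀ (pos hx).ne'] at hm
    rw [inv_mul_eq_iff_eq_mul₀ (pos hy).ne'] at hk
    have hm0 := eq_zero_of_int_mul_eq_of_mem hR hx hy hxy (m := m) (k := k) (by linarith)
    simp [hm0] at hm
    exact hs hm
  have lengths {u : ℝ} (hu : u ∈ ({1, R, R - 1} : Set ℝ)) :
      u ∈ ({1, R, R - 1, R + 1} : Set ℝ) ∧ u ≠ R + 1 := by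
    rcases hu with rfl | rfl | rfl <;> simp <;> linarith
  have hself : ∃ k : ℤ, (R + 1)⁻¹ * (R + 1) = k :=
    ⟨1, by rw [inv_mul_cancel₀ (pos (by simp)).ne', Int.cast_one]⟩
  rw [hasIntegralSide_plane_iff, hasIntegralSide_plane_iff]
  rintro ⟨⟨-, hm⟩ | ⟨-, hm⟩, ⟨-, hk⟩ | ⟨-, hk⟩⟩
  · exact incommensurable (lengths hu₀).1 (lengths hv₀).1 h₀ hℓ₀ hm hk
  · rcases hside with h | h
    · exact incommensurable (lengths hu₀).1 (by simp) (lengths hu₀).2 hℓ₀ hm (h ▸ hself)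
    · exact incommensurable (lengths hu₁).1 (by simp) (lengths hu₁).2 hℓ₁ hk (h ▸ hself)
  · rcases hside with h | h
    · exact incommensurable (lengths hv₀).1 (by simp) (lengths hv₀).2 hℓ₀ hk (h ▸ hself)
    · exact incommensurable (lengths hv₁).1 (by simp) (lengths hv₁).2 hℓ₁ hm (h ▸ hself)
  · exact incommensurable (lengths hv₁).1 (lengths hu₁).1 h₁.symm hℓ₁ hm hk

theorem not_triTilesProper_of_side {R : ℝ} (hR : Irrational R) (hR2 : 2 < R) {lo hi : Fin (n + 2) → ℝ} (hlt : ∀ j, lo j < hi j)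
    {p : Fin (n + 2)} (hp : p = 0 ∨ p = 1) (hside : hi p - lo p = R + 1) :
    ¬ TriTilesProper (n + 2) (plane 1 R 1) (plane R 1 1) (plane (R - 1) (R - 1) 1)
      (openBox lo hi) := by
  rintro ⟨Λ₁, Λ₂, Λ₃, hempty, H⟩
  have side (ξ : Fin (n + 2) → ℝ) := hasIntegralSide_of_isTriTiling (ξ := ξ) hlt (H := H)
  have hℓ₀ : (hi - lo) 0 ≠ 0 := sub_ne_zero.2 (hlt 0).ne'
  have hℓ₁ : (hi - lo) 1 ≠ 0 := sub_ne_zero.2 (hlt 1).ne'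
  have hℓ : (hi - lo) 0 = R + 1 ∨ (hi - lo) 1 = R + 1 := by
    rcases hp with rfl | rfl <;> simp [hside]
  have hR0 : R ≠ 0 := by linarith
  have hR1 : R - 1 ≠ 0 := by linarith
  have mem1 : (1 : ℝ) ∈ ({1, R, R - 1} : Set ℝ) := by simp
  have memR : R ∈ ({1, R, R - 1} : Set ℝ) := by simp
  have memR1 : R - 1 ∈ ({1, R, R - 1} : Set ℝ) := by simp
  -- For the two brick types `A`, `B` in use, test with the frequencies `(A₀⁻¹, B₁⁻¹)` and
  -- `(B₀⁻¹, A₁⁻¹)`: each of them has an integral side for `A` and one for `B`.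
  rcases hempty with h | h | h
  · exact not_hasIntegralSide_pair hR hR2 hℓ₀ hℓ₁ hℓ memR mem1 memR1 memR1 (by linarith)
      (by linarith)
      ⟨side _ (.inl h) (.inr (hasIntegralSide_plane_fst hR0))
          (.inr (hasIntegralSide_plane_snd hR1)),
        side _ (.inl h) (.inr (hasIntegralSide_plane_snd one_ne_zero))
          (.inr (hasIntegralSide_plane_fst hR1))⟩
  · exact not_hasIntegralSide_pair hR hR2 hℓ₀ hℓ₁ hℓ mem1 memR memR1 memR1 (by linarith)
      (by linarith)
      ⟨side _ (.inr (hasIntegralSide_plane_fst one_ne_zero)) (.inl h)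
          (.inr (hasIntegralSide_plane_snd hR1)),
        side _ (.inr (hasIntegralSide_plane_snd hR0)) (.inl h)
          (.inr (hasIntegralSide_plane_fst hR1))⟩
  · exact not_hasIntegralSide_pair hR hR2 hℓ₀ hℓ₁ hℓ mem1 memR memR mem1 (by linarith)
      (by linarith)
      ⟨side _ (.inr (hasIntegralSide_plane_fst one_ne_zero))
          (.inr (hasIntegralSide_plane_snd one_ne_zero)) (.inl h),
        side _ (.inr (hasIntegralSide_plane_snd hR0))
          (.inr (hasIntegralSide_plane_fst hR0)) (.inl h)⟩

end Example

/-- In every dimension `d ≥ 2` there are three bricks and a box `Q` tileable by their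
translates, such that no hyperplane cut `x j = α` splits `Q` into two boxes each tileable
by translates of a proper subset of the three brick types. -/
theorem no_bower_michael_for_three_bricks (d : ℕ) (hd : 2 ≤ d) :
    ∃ c1 c2 c3 q : Fin d → ℝ,
      (∀ j, 0 < c1 j) ∧ (∀ j, 0 < c2 j) ∧ (∀ j, 0 < c3 j) ∧ (∀ j, 0 < q j) ∧
      TriTiles d c1 c2 c3 {x : EuclideanSpace ℝ (Fin d) | ∀ j, x j ∈ Set.Ioo 0 (q j)} ∧
      ∀ (j : Fin d) (α : ℝ),
        ¬ (TriTilesProper d c1 c2 c3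
              {x : EuclideanSpace ℝ (Fin d) | (∀ i, x i ∈ Set.Ioo 0 (q i)) ∧ x j < α} ∧
           TriTilesProper d c1 c2 c3
              {x : EuclideanSpace ℝ (Fin d) | (∀ i, x i ∈ Set.Ioo 0 (q i)) ∧ α < x j}) := by
  obtain ⟨n, rfl⟩ := Nat.exists_eq_add_of_le' hd
  have hπ : 2 < π := by linarith [Real.pi_gt_three]
  have hq := plane_pos (n := n) (a := π + 1) (b := π + 1) (by linarith) (by linarith) one_pos
  refine ⟨plane 1 π 1, plane π 1 1, plane (π - 1) (π - 1) 1, plane (π + 1) (π + 1) 1,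
    plane_pos one_pos (by linarith) one_pos, plane_pos (by linarith) one_pos one_pos,
    plane_pos (by linarith) (by linarith) one_pos, hq,
    ⟨_, _, _, isTriTiling_square (by linarith)⟩, ?_⟩
  rintro j α ⟨hlow, hup⟩
  rw [setOf_lt_eq_openBox] at hlow
  rw [setOf_gt_eq_openBox] at hup
  obtain ⟨p, hp, hpj⟩ : ∃ p : Fin (n + 2), (p = 0 ∨ p = 1) ∧ p ≠ j := by
    by_cases hj : j = 0
    exacts [⟨1, .inr rfl, hj ▸ by simp⟩, ⟨0, .inl rfl, Ne.symm hj⟩]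
  have hqp : plane (n := n) (π + 1) (π + 1) 1 p = π + 1 := by rcases hp with rfl | rfl <;> rfl
  rcases le_or_gt α 0 with hα | hα
  · refine not_triTilesProper_of_side irrational_pi hπ (fun i => ?_) hp ?_ hup
    · rcases eq_or_ne i j with rfl | hij
      · simp [hα, hq i]
      · simpa [hij] using hq i
    · simp [Function.update_of_ne hpj, hqp]
  · refine not_triTilesProper_of_side irrational_pi hπ (fun i => ?_) hp ?_ hlow
    · rcases eq_or_ne i j with rfl | hij
      · simp [hα, hq i]
      · simpa [hij] using hq i
    · simp [Function.update_of_ne hpj, hqp]
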